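/- arXiv:1312.2987 — 5 statements merged into one kernel-verified Lean document; each statement's English description precedes it below -/
import Mathlib

section
/- Let A be a complex number. Then the equation A = (1-ξ)/(1-η) has at most one solution (ξ, η) ∈ ℂ² satisfying ξ ≠ η, |ξ| = |η| = 1, ξ ≠ 1, and η ≠ 1. -/
/-!
Conjugating `A (1 - η) = 1 - ξ` and using `conj z = z⁻¹` on the unit circle gives
`conj A · ξ = η · A`. Eliminating `η` yields `ξ (1 - conj A) = 1 - A`, and `conj A ≠ 1` because
`A = 1` would force `ξ = η`. Hence `ξ`, and then `η`, are determined by `A`.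
-/

open ComplexConjugate

namespace Complex

lemma conj_mul_eq_one_of_norm_eq_one {z : ℂ} (hz : ‖z‖ = 1) : conj z * z = 1 := by
  rw [conj_mul', hz]; norm_num

variable {A ξ η : ℂ}

lemma conj_mul_eq_mul_of_mul_one_sub_eq (hξ : ‖ξ‖ = 1) (hη : ‖η‖ = 1) (hη1 : η ≠ 1)
    (h : A * (1 - η) = 1 - ξ) : conj A * ξ = η * A := by
  have hconj : conj A * (1 - conj η) = 1 - conj ξ := by simpa using congrArg conj h
  have : conj A * ξ * (1 - η) = η * A * (1 - η) := by
    linear_combination (-(ξ * η)) * hconj - (ξ * conj A) * conj_mul_eq_one_of_norm_eq_one hη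
      + η * conj_mul_eq_one_of_norm_eq_one hξ - η * h
  exact mul_right_cancel₀ (sub_ne_zero.mpr hη1.symm) this

lemma eq_of_eq_one_sub_div_one_sub (hξη : ξ ≠ η) (hξ : ‖ξ‖ = 1) (hη : ‖η‖ = 1)
    (hξ1 : ξ ≠ 1) (hη1 : η ≠ 1) (h : A = (1 - ξ) / (1 - η)) :
    ξ = (1 - A) / (1 - conj A) ∧ η = conj A * ξ / A := by
  have hA : A * (1 - η) = 1 - ξ := by rw [h, div_mul_cancel₀ _ (sub_ne_zero.mpr hη1.symm)]
  have hkey := conj_mul_eq_mul_of_mul_one_sub_eq hξ hη hη1 hA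
  have hA0 : A ≠ 0 := by
    rintro rfl
    exact hξ1 (sub_eq_zero.mp (by simpa using hA.symm)).symm
  have hA1 : conj A ≠ 1 := by
    intro hA1
    rw [(map_eq_one_iff conj star_injective).mp hA1, one_mul] at hA
    exact hξη (sub_right_injective hA).symm
  refine ⟨?_, by rw [hkey, mul_div_cancel_right₀ _ hA0]⟩
  rw [eq_div_iff (sub_ne_zero.mpr hA1.symm)]
  linear_combination hA - hkey

end Complex

/-- For a complex number `A`, the equation `A = (1-ξ)/(1-η)` has at most one
solution `(ξ, η)` with `ξ ≠ η`, `|ξ| = |η| = 1`, `ξ ≠ 1`, `η ≠ 1`. -/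
theorem at_most_one_solution (A : ℂ) (ξ η ξ₁ η₁ : ℂ)
    (hξη : ξ ≠ η) (hξ : ‖ξ‖ = 1) (hη : ‖η‖ = 1)
    (hξ1 : ξ ≠ 1) (hη1 : η ≠ 1)
    (hξη' : ξ₁ ≠ η₁) (hξ' : ‖ξ₁‖ = 1) (hη' : ‖η₁‖ = 1)
    (hξ1' : ξ₁ ≠ 1) (hη1' : η₁ ≠ 1)
    (h : A = (1 - ξ) / (1 - η)) (h' : A = (1 - ξ₁) / (1 - η₁)) :
    ξ = ξ₁ ∧ η = η₁ := by
  obtain ⟨hξA, hηA⟩ := Complex.eq_of_eq_one_sub_div_one_sub hξη hξ hη hξ1 hη1 h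
  obtain ⟨hξA', hηA'⟩ := Complex.eq_of_eq_one_sub_div_one_sub hξη' hξ' hη' hξ1' hη1' h'
  have hξξ : ξ = ξ₁ := hξA.trans hξA'.symm
  exact ⟨hξξ, by rw [hηA, hηA', hξξ]⟩
end

section
/- If a, b, c, d are complex numbers on the unit circle centered at 1 (i.e., |a-1| = |b-1| = |c-1| = |d-1| = 1), none equal to 0, and a*b = c*d, then {a, b} = {c, d} as sets. -/
/-!
Inversion maps the circle `‖z - 1‖ = 1` (minus `0`) onto the line `re u = 1/2`, on which
`conj u = 1 - u`. Conjugating `u * v = w * x` for inverted points gives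
`(1 - u) * (1 - v) = (1 - w) * (1 - x)`, so the two inverted pairs have the same sum and the same
product, hence are the roots of the same quadratic.
-/

open ComplexConjugate

theorem Set.pair_eq_pair_of_add_eq_of_mul_eq {R : Type*} [CommRing R] [NoZeroDivisors R]
    {a b c d : R} (hs : a + b = c + d) (hp : a * b = c * d) : ({a, b} : Set R) = {c, d} := by
  have hroots : (a - c) * (a - d) = 0 := by linear_combination a * hs - hp
  rcases mul_eq_zero.mp hroots with hac | had
  · obtain rfl : a = c := sub_eq_zero.mp hac
    obtain rfl : b = d := add_left_cancel hs
    rfl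
  · obtain rfl : a = d := sub_eq_zero.mp had
    obtain rfl : b = c := by linear_combination hs
    exact Set.pair_comm a b

namespace Complex

theorem inv_re_eq_half_of_norm_sub_one_eq_one {z : ℂ} (hz : ‖z - 1‖ = 1) (hz0 : z ≠ 0) :
    z⁻¹.re = 1 / 2 := by
  have hnormSq : normSq z = 2 * z.re := by
    have := congrArg (· ^ 2) hz
    simp only [← normSq_eq_norm_sq, normSq_apply, sub_re, sub_im, one_re, one_im] at this
    rw [normSq_apply]
    linarith
  have hre : z.re ≠ 0 := fun h0 => hz0 (normSq_eq_zero.mp (by rw [hnormSq, h0, mul_zero]))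
  rw [inv_re, hnormSq]
  field_simp

theorem conj_eq_one_sub_of_re_eq_half {u : ℂ} (hu : u.re = 1 / 2) : conj u = 1 - u :=
  Complex.ext (by simp [hu]; norm_num) (by simp)

theorem add_eq_add_of_mul_eq_of_re_eq_half {u v w x : ℂ} (hu : u.re = 1 / 2)
    (hv : v.re = 1 / 2) (hw : w.re = 1 / 2) (hx : x.re = 1 / 2) (h : u * v = w * x) :
    u + v = w + x := by
  have hconj : (1 - u) * (1 - v) = (1 - w) * (1 - x) := by
    simpa only [map_mul, conj_eq_one_sub_of_re_eq_half, hu, hv, hw, hx] using congrArg conj h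
  linear_combination h - hconj

end Complex

/-- If `a, b, c, d` lie on the unit circle centered at `1`, none is `0`,
and `a*b = c*d`, then `{a, b} = {c, d}` as sets. -/
theorem circle_mul_pairs (a b c d : ℂ)
    (ha : ‖a - 1‖ = 1) (hb : ‖b - 1‖ = 1)
    (hc : ‖c - 1‖ = 1) (hd : ‖d - 1‖ = 1)
    (ha0 : a ≠ 0) (hb0 : b ≠ 0) (hc0 : c ≠ 0) (hd0 : d ≠ 0)
    (h : a * b = c * d) : ({a, b} : Set ℂ) = {c, d} := by
  have hinv : a⁻¹ * b⁻¹ = c⁻¹ * d⁻¹ := by rw [← mul_inv, h, mul_inv]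
  have hsum : a⁻¹ + b⁻¹ = c⁻¹ + d⁻¹ :=
    Complex.add_eq_add_of_mul_eq_of_re_eq_half
      (Complex.inv_re_eq_half_of_norm_sub_one_eq_one ha ha0)
      (Complex.inv_re_eq_half_of_norm_sub_one_eq_one hb hb0)
      (Complex.inv_re_eq_half_of_norm_sub_one_eq_one hc hc0)
      (Complex.inv_re_eq_half_of_norm_sub_one_eq_one hd hd0) hinv
  have key : ({a⁻¹, b⁻¹} : Set ℂ) = {c⁻¹, d⁻¹} := Set.pair_eq_pair_of_add_eq_of_mul_eq hsum hinv
  simpa [Set.image_pair] using congrArg (Inv.inv '' ·) key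
end

section
/- Let ζ be a primitive n-th root of unity and let A be a nonzero complex number. Then there is at most one pair (a, b) with a, b ∈ {1, ..., n-1}, a ≠ b, such that A = (1 - ζ^a)/(1 - ζ^b). -/
/-!
Conjugating `A * (1 - w) = 1 - u` and using `conj z = z⁻¹` on the unit circle gives the linear
relation `u * conj A = A * w`. Eliminating `u` between the two relations leaves a linear equation
for `w` whose coefficients depend only on `A`, so `A ∉ {0, 1}` determines `w`, and then `u`.
-/

open ComplexConjugate

namespace Complex

variable {A u w : ℂ}

theorem mul_conj_eq_of_mul_one_sub_eq (hu : ‖u‖ = 1) (hw : ‖w‖ = 1) (hw1 : w ≠ 1)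
    (h : A * (1 - w) = 1 - u) : u * conj A = A * w := by
  have hu' : u * conj u = 1 := by simp [mul_conj', hu]
  have hw' : w * conj w = 1 := by simp [mul_conj', hw]
  have hconj : conj A * (1 - conj w) = 1 - conj u := by simpa using congrArg conj h
  refine mul_left_cancel₀ (sub_ne_zero.mpr hw1) ?_
  linear_combination (u * w) * hconj + w * h + u * conj A * hw' - w * hu'

theorem eq_of_mul_one_sub_eq (hA0 : A ≠ 0) (hA1 : A ≠ 1) (hu : ‖u‖ = 1) (hw : ‖w‖ = 1)
    (hw1 : w ≠ 1) (h : A * (1 - w) = 1 - u) :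
    w = conj A * (A - 1) / (A * (conj A - 1)) := by
  have hconjA1 : conj A - 1 ≠ 0 :=
    sub_ne_zero.mpr ((map_ne_one_iff _ (RingHom.injective _)).mpr hA1)
  rw [eq_div_iff (mul_ne_zero hA0 hconjA1)]
  linear_combination -conj A * h + mul_conj_eq_of_mul_one_sub_eq hu hw hw1 h

end Complex

theorem at_most_one_root_pair_general {n : ℕ} (ζ : ℂ) (hζ : IsPrimitiveRoot ζ n)
    (A : ℂ) (hA : A ≠ 0) (a b a' b' : ℕ)
    (ha' : a ≤ n - 1) (hb : 1 ≤ b) (hb' : b ≤ n - 1)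
    (ha1' : a' ≤ n - 1) (hb1 : 1 ≤ b') (hb1' : b' ≤ n - 1)
    (hab : a ≠ b)
    (h : A = (1 - ζ ^ a) / (1 - ζ ^ b)) (h' : A = (1 - ζ ^ a') / (1 - ζ ^ b')) :
    a = a' ∧ b = b' := by
  have hn : 0 < n := by omega
  have hnorm (k : ℕ) : ‖ζ ^ k‖ = 1 := by rw [norm_pow, hζ.norm'_eq_one hn.ne', one_pow]
  have hb_ne : ζ ^ b ≠ 1 := hζ.pow_ne_one_of_pos_of_lt (by omega) (by omega)
  have hb'_ne : ζ ^ b' ≠ 1 := hζ.pow_ne_one_of_pos_of_lt (by omega) (by omega)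
  rw [eq_div_iff (sub_ne_zero.mpr hb_ne.symm)] at h
  rw [eq_div_iff (sub_ne_zero.mpr hb'_ne.symm)] at h'
  have hA1 : A ≠ 1 := by
    rintro rfl
    exact hab (hζ.pow_inj (by omega) (by omega) (by linear_combination h))
  have hbb : ζ ^ b = ζ ^ b' :=
    (Complex.eq_of_mul_one_sub_eq hA hA1 (hnorm a) (hnorm b) hb_ne h).trans
      (Complex.eq_of_mul_one_sub_eq hA hA1 (hnorm a') (hnorm b') hb'_ne h').symm
  have haa : ζ ^ a = ζ ^ a' := by linear_combination h - h' + A * hbb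
  exact ⟨hζ.pow_inj (by omega) (by omega) haa, hζ.pow_inj (by omega) (by omega) hbb⟩

/-- For `ζ` a primitive `n`-th root of unity and `A ≠ 0`, there is at most one
pair `(a, b)` with `a, b ∈ {1, …, n-1}`, `a ≠ b`, and `A = (1 - ζ^a)/(1 - ζ^b)`. -/
theorem at_most_one_root_pair {n : ℕ} (ζ : ℂ) (hζ : IsPrimitiveRoot ζ n)
    (A : ℂ) (hA : A ≠ 0) (a b a' b' : ℕ)
    (ha : 1 ≤ a) (ha' : a ≤ n - 1) (hb : 1 ≤ b) (hb' : b ≤ n - 1)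
    (ha1 : 1 ≤ a') (ha1' : a' ≤ n - 1) (hb1 : 1 ≤ b') (hb1' : b' ≤ n - 1)
    (hab : a ≠ b) (hab' : a' ≠ b')
    (h : A = (1 - ζ ^ a) / (1 - ζ ^ b)) (h' : A = (1 - ζ ^ a') / (1 - ζ ^ b')) :
    a = a' ∧ b = b' :=
  at_most_one_root_pair_general ζ hζ A hA a b a' b' ha' hb hb' ha1' hb1 hb1' hab h h'
end

section
/- Suppose α, β, α₁, β₁ ∈ (0, 2π) satisfy: (i) α - β = α₁ - β₁, (ii) sin(α/2) sin(β₁/2) = sin(α₁/2) sin(β/2), and (iii) cos(α/2) cos(β₁/2) = cos(α₁/2) cos(β/2). If α ≠ β, then α = α₁ and β = β₁. -/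
open Real

/-- trigonometric core of the uniqueness proof. -/
theorem trig_uniqueness (α β α₁ β₁ : ℝ)
    (hα : α ∈ Set.Ioo 0 (2 * π)) (hβ : β ∈ Set.Ioo 0 (2 * π))
    (hα₁ : α₁ ∈ Set.Ioo 0 (2 * π)) (hβ₁ : β₁ ∈ Set.Ioo 0 (2 * π))
    (h1 : α - β = α₁ - β₁)
    (h2 : Real.sin (α / 2) * Real.sin (β₁ / 2) = Real.sin (α₁ / 2) * Real.sin (β / 2))
    (h3 : Real.cos (α / 2) * Real.cos (β₁ / 2) = Real.cos (α₁ / 2) * Real.cos (β / 2))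
    (hne : α ≠ β) : α = α₁ ∧ β = β₁ := by
  obtain ⟨ha1, ha2⟩ := hα
  obtain ⟨hb1, hb2⟩ := hβ
  obtain ⟨ha1', ha2'⟩ := hα₁
  obtain ⟨hb1', hb2'⟩ := hβ₁
  have hcos : Real.cos (α / 2 - β₁ / 2) = Real.cos (α₁ / 2 - β / 2) := by
    rw [Real.cos_sub, Real.cos_sub, h2, h3]
  have habs : |α / 2 - β₁ / 2| = |α₁ / 2 - β / 2| := by
    apply Real.injOn_cos ⟨abs_nonneg _, ?_⟩ ⟨abs_nonneg _, ?_⟩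
    · rwa [Real.cos_abs, Real.cos_abs]
    · rw [abs_le]; constructor <;> nlinarith [Real.pi_pos]
    · rw [abs_le]; constructor <;> nlinarith [Real.pi_pos]
  rcases abs_eq_abs.mp habs with h | h
  · constructor <;> linarith
  · exfalso; apply hne; linarith
end

section
/- If x, y ∈ (0, π), cot x · cot y₁ = cot x₁ · cot y, cot x - cot y = cot x₁ - cot y₁, x ≠ y, and cot y ≠ 0, where x₁, y₁ ∈ (0, π), then y₁ = y and x₁ = x. -/
open Real

lemma cot_inj_Ioo {a b : ℝ} (ha : a ∈ Set.Ioo 0 π) (hb : b ∈ Set.Ioo 0 π)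
    (h : Real.cot a = Real.cot b) : a = b := by
  have hsa : Real.sin a > 0 := Real.sin_pos_of_pos_of_lt_pi ha.1 ha.2
  have hsb : Real.sin b > 0 := Real.sin_pos_of_pos_of_lt_pi hb.1 hb.2
  rw [Real.cot_eq_cos_div_sin, Real.cot_eq_cos_div_sin, div_eq_div_iff hsa.ne' hsb.ne'] at h
  have : Real.sin (a - b) = 0 := by
    rw [Real.sin_sub]; linarith
  have hab : a - b = 0 := by
    rw [Real.sin_eq_zero_iff_of_lt_of_lt (by linarith [ha.1, hb.2]) (by linarith [ha.2, hb.1])] at this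
    exact this
  linarith

/-- cotangent cancellation step of the uniqueness proof. -/
theorem cot_cancellation (x y x₁ y₁ : ℝ)
    (hx : x ∈ Set.Ioo 0 π) (hy : y ∈ Set.Ioo 0 π)
    (hx₁ : x₁ ∈ Set.Ioo 0 π) (hy₁ : y₁ ∈ Set.Ioo 0 π)
    (h1 : Real.cot x * Real.cot y₁ = Real.cot x₁ * Real.cot y)
    (h2 : Real.cot x - Real.cot y = Real.cot x₁ - Real.cot y₁)
    (hxy : x ≠ y) (hcy : Real.cot y ≠ 0) :
    y₁ = y ∧ x₁ = x := by
  have hne : Real.cot x ≠ Real.cot y := fun h => hxy (cot_inj_Ioo hx hy h)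
  have key : (Real.cot x - Real.cot y) * (Real.cot y₁ - Real.cot y) = 0 := by linear_combination h1 - Real.cot y * h2
  have hb : Real.cot y₁ = Real.cot y := by
    rcases mul_eq_zero.1 key with h | h
    · exact absurd (by linarith : Real.cot x = Real.cot y) hne
    · linarith
  have ha : Real.cot x₁ = Real.cot x := by linarith
  exact ⟨cot_inj_Ioo hy₁ hy hb, cot_inj_Ioo hx₁ hx ha⟩
end
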